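/- Let T be a phylogenetic tree with labeled vertex set L and let G be its distance graph. Let h be a hidden vertex of T such that some labeled vertex l is a leaf of T, is adjacent to h in T, and satisfies l ∈ Sg(h), and let v ∈ Sg(h) with v ≠ l. Then for every labeled vertex j with j ∉ Sg(h) such that the edge {l, j} lies in at least one MST of G: (a) d(j, l) = d(j, v), and (b) the edge {v, j} also lies in at least one MST of G. -/

import Mathlib

open SimpleGraph

/-- The threshold subgraph `G_{≤ t}`: same vertices, only edges of weight `≤ t`. -/
def thresholdGraph {V : Type*} (G : SimpleGraph V) (w : Sym2 V → ℝ) (t : ℝ) :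
    SimpleGraph V where
  Adj u v := G.Adj u v ∧ w s(u, v) ≤ t
  symm := by
    constructor
    intro u v hv
    exact ⟨hv.1.symm, by rw [Sym2.eq_swap]; exact hv.2⟩
  loopless := ⟨fun v hv => G.irrefl hv.1⟩

/-- The strict threshold subgraph `G_{< t}`. -/
def strictThresholdGraph {V : Type*} (G : SimpleGraph V) (w : Sym2 V → ℝ) (t : ℝ) :
    SimpleGraph V where
  Adj u v := G.Adj u v ∧ w s(u, v) < t
  symm := by
    constructor
    intro u v hv
    exact ⟨hv.1.symm, by rw [Sym2.eq_swap]; exact hv.2⟩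
  loopless := ⟨fun v hv => G.irrefl hv.1⟩

/-- The laminar family of an edge-weighted graph: the whole vertex set together with the
vertex sets of the connected components of every threshold subgraph. -/
def laminarFamily {V : Type*} (G : SimpleGraph V) (w : Sym2 V → ℝ) : Set (Set V) :=
  insert Set.univ
    {S | ∃ (t : ℝ) (C : (thresholdGraph G w t).ConnectedComponent), S = C.supp}

/-- `M` is a spanning tree of `G`. -/
def IsSpanningTree {V : Type*} (G M : SimpleGraph V) : Prop :=
  M ≤ G ∧ M.IsTree

/-- Total weight of (the edges of) a graph. -/
noncomputable def totalWeight {V : Type*} [Finite V] (M : SimpleGraph V)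
    (w : Sym2 V → ℝ) : ℝ :=
  ∑ e ∈ M.edgeSet.toFinite.toFinset, w e

/-- `M` is a minimum spanning tree of `G` with respect to the weights `w`. -/
def IsMST {V : Type*} [Finite V] (G : SimpleGraph V) (w : Sym2 V → ℝ)
    (M : SimpleGraph V) : Prop :=
  IsSpanningTree G M ∧ ∀ M' : SimpleGraph V, IsSpanningTree G M' →
    totalWeight M w ≤ totalWeight M' w

/-- A phylogenetic tree: a finite tree with strictly positive edge lengths and a nonempty
set `L` of labeled vertices, each hidden vertex having degree at least 3. -/
structure PhyloTree (V : Type*) where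
  finV : Finite V
  T : SimpleGraph V
  isTree : T.IsTree
  len : Sym2 V → ℝ
  len_pos : ∀ e ∈ T.edgeSet, 0 < len e
  L : Set V
  L_nonempty : L.Nonempty
  hidden_deg : ∀ v, v ∉ L → 3 ≤ (T.neighborSet v).ncard

namespace PhyloTree

variable {V : Type*}

/-- The unique path between two vertices of the tree. -/
noncomputable def path (P : PhyloTree V) (u v : V) : P.T.Walk u v :=
  (P.isTree.existsUnique_path u v).exists.choose

lemma path_isPath (P : PhyloTree V) (u v : V) : (P.path u v).IsPath :=
  (P.isTree.existsUnique_path u v).exists.choose_spec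

/-- The tree distance: the sum of the edge lengths along the unique path. -/
noncomputable def dist (P : PhyloTree V) (u v : V) : ℝ :=
  ((P.path u v).edges.map P.len).sum

lemma dist_comm (P : PhyloTree V) (u v : V) : P.dist u v = P.dist v u := by
  have h : (P.path u v).reverse = P.path v u :=
    (P.isTree.existsUnique_path v u).unique ((P.path_isPath u v).reverse)
      (P.path_isPath v u)
  unfold dist
  rw [← h, SimpleGraph.Walk.edges_reverse, List.map_reverse, List.sum_reverse]

/-- The tree distance as a symmetric function on unordered pairs. -/
noncomputable def wdist (P : PhyloTree V) : Sym2 V → ℝ :=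
  Sym2.lift ⟨fun u v => P.dist u v, fun u v => P.dist_comm u v⟩

/-- The surrogate set of a vertex: the labeled vertices closest to it. -/
def Sg (P : PhyloTree V) (h : V) : Set V :=
  {l | l ∈ P.L ∧ ∀ l' ∈ P.L, P.dist l h ≤ P.dist l' h}

/-- `s` is the surrogate vertex `Sg_R(h)` of `h` w.r.t. the ranking `R`:
the element of the surrogate set of `h` of smallest `R`-value. -/
def IsSgR (P : PhyloTree V) (R : V → ℕ) (h : V) (s : V) : Prop :=
  s ∈ P.Sg h ∧ ∀ l ∈ P.Sg h, R s ≤ R l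

/-- The edge weights of the distance graph of `P` (the complete graph on `↥P.L`). -/
noncomputable def wG (P : PhyloTree V) : Sym2 ↥P.L → ℝ :=
  fun e => P.wdist (e.map Subtype.val)

/-- An edge `e` of the distance graph lying in at least one MST (i.e. an edge of `g`). -/
def mstEdge (P : PhyloTree V) (e : Sym2 ↥P.L) : Prop :=
  haveI := P.finV
  ∃ M : SimpleGraph ↥P.L, IsMST (⊤ : SimpleGraph ↥P.L) P.wG M ∧ e ∈ M.edgeSet

/-- `δ_max(v)`: the maximum degree of `v` over all MSTs of the distance graph. -/
noncomputable def deltaMax (P : PhyloTree V) (v : ↥P.L) : ℕ :=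
  haveI := P.finV
  sSup {d : ℕ | ∃ M : SimpleGraph ↥P.L,
    IsMST (⊤ : SimpleGraph ↥P.L) P.wG M ∧ d = (M.neighborSet v).ncard}

end PhyloTree

/-- The smaller of the two ranks of the endpoints of an edge. -/
def sym2MinR {α : Type*} (R : α → ℕ) : Sym2 α → ℕ :=
  Sym2.lift ⟨fun a b => min (R a) (R b), fun a b => min_comm _ _⟩

/-- The larger of the two ranks of the endpoints of an edge. -/
def sym2MaxR {α : Type*} (R : α → ℕ) : Sym2 α → ℕ :=
  Sym2.lift ⟨fun a b => max (R a) (R b), fun a b => max_comm _ _⟩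

/-- The strict total order `<_R` on edges: first by weight, then by the smaller rank of
the endpoints, then by the larger rank of the endpoints. -/
def edgeLT {α : Type*} (w : Sym2 α → ℝ) (R : α → ℕ) (e f : Sym2 α) : Prop :=
  w e < w f ∨ (w e = w f ∧ (sym2MinR R e < sym2MinR R f ∨
    (sym2MinR R e = sym2MinR R f ∧ sym2MaxR R e < sym2MaxR R f)))

/-- `M` is the vertex-ranked MST of `G` w.r.t. the ranking `R`: a spanning tree such that
every non-tree edge `{u,v}` of `G` is the `<_R`-greatest edge of the cycle it closes,
i.e. every edge of the `M`-path from `u` to `v` is `<_R`-smaller than `{u,v}`. -/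
def IsVRMST {α : Type*} (G : SimpleGraph α) (w : Sym2 α → ℝ) (R : α → ℕ)
    (M : SimpleGraph α) : Prop :=
  IsSpanningTree G M ∧ ∀ u v : α, G.Adj u v → ¬M.Adj u v →
    ∀ p : M.Walk u v, p.IsPath → ∀ f ∈ p.edges, edgeLT w R f s(u, v)

/-!
A leaf `l` hanging off `h` reaches every other vertex through `h`, so `d(l,u) = d(l,h) + d(h,u)`
for `u ≠ l`. Together with `d(v,h) = d(l,h) < d(j,h)` this gives `d(l,v) < d(l,j)` and, by the
triangle inequality through `h`, `d(v,j) ≤ d(l,j)`. Now delete `lj` from an MST containing it.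
If `v` fell on `j`'s side, exchanging `lj` for the strictly lighter `lv` would produce a lighter
spanning tree. So `v` lies on `l`'s side, and exchanging `lj` for `vj` yields a spanning tree that
is no heavier: it is an MST containing `vj`, and `d(v,j) = d(l,j)`.
-/

namespace SimpleGraph

variable {V : Type*} {M G : SimpleGraph V} {a b c x y : V}

lemma Preconnected.reachable_deleteEdges_left_or_right (hM : M.Preconnected) (a b z : V) :
    (M.deleteEdges {s(a, b)}).Reachable z a ∨ (M.deleteEdges {s(a, b)}).Reachable z b := by
  suffices H : ∀ {u w : V}, M.Walk u w → w = a →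
      (M.deleteEdges {s(a, b)}).Reachable u a ∨ (M.deleteEdges {s(a, b)}).Reachable u b from
    H (hM z a).some rfl
  intro u w p hw
  induction p with
  | nil => exact .inl (hw ▸ Reachable.refl _)
  | @cons u x _ hux _ ih =>
    by_cases he : s(u, x) = s(a, b)
    · rcases Sym2.eq_iff.mp he with ⟨hu, -⟩ | ⟨hu, -⟩
      exacts [.inl (hu ▸ Reachable.refl _), .inr (hu ▸ Reachable.refl _)]
    · have hux' : (M.deleteEdges {s(a, b)}).Adj u x := by simp [hux, he]
      exact (ih hw).imp hux'.reachable.trans hux'.reachable.trans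

lemma IsTree.not_reachable_deleteEdges (hM : M.IsTree) (hab : M.Adj a b)
    (hxa : (M.deleteEdges {s(a, b)}).Reachable x a)
    (hyb : (M.deleteEdges {s(a, b)}).Reachable y b) :
    ¬(M.deleteEdges {s(a, b)}).Reachable x y := fun hxy =>
  isBridge_iff.mp (isAcyclic_iff_forall_adj_isBridge.mp hM.isAcyclic hab)
    (hxa.symm.trans (hxy.trans hyb))

lemma IsTree.deleteEdges_sup_edge (hM : M.IsTree) (hab : M.Adj a b) (hxy : x ≠ y)
    (hxa : (M.deleteEdges {s(a, b)}).Reachable x a)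
    (hyb : (M.deleteEdges {s(a, b)}).Reachable y b) :
    (M.deleteEdges {s(a, b)} ⊔ edge x y).IsTree := by
  set M' := M.deleteEdges {s(a, b)}
  refine ⟨?_, (hM.isAcyclic.anti (deleteEdges_le _)).sup_edge_of_not_reachable
    (hM.not_reachable_deleteEdges hab hxa hyb)⟩
  have hxy_adj : (M' ⊔ edge x y).Adj x y :=
    le_sup_right (a := M') <| (edge_adj ..).mpr ⟨Or.inl ⟨rfl, rfl⟩, hxy⟩
  have hba : (M' ⊔ edge x y).Reachable b a :=
    (hyb.mono le_sup_left).symm.trans (hxy_adj.reachable.symm.trans (hxa.mono le_sup_left))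
  have hreach_a (z : V) : (M' ⊔ edge x y).Reachable z a :=
    (hM.connected.preconnected.reachable_deleteEdges_left_or_right a b z).elim
      (·.mono le_sup_left) ((·.mono le_sup_left |>.trans hba))
  have : Nonempty V := ⟨a⟩
  exact ⟨fun u v => (hreach_a u).trans (hreach_a v).symm⟩

end SimpleGraph

section Exchange

variable {V : Type*} {M G : SimpleGraph V} {a b c x y : V}

lemma totalWeight_deleteEdges_sup_edge [Finite V] (w : Sym2 V → ℝ) (hab : M.Adj a b)
    (hxy : x ≠ y) (hnew : ¬(M.deleteEdges {s(a, b)}).Adj x y) :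
    totalWeight (M.deleteEdges {s(a, b)} ⊔ edge x y) w
      = totalWeight M w - w s(a, b) + w s(x, y) := by
  classical
  have hedges : (M.deleteEdges {s(a, b)} ⊔ edge x y).edgeSet.toFinite.toFinset
      = insert s(x, y) (M.edgeSet.toFinite.toFinset.erase s(a, b)) := by
    ext e
    simp only [Set.Finite.mem_toFinset, edgeSet_sup, edgeSet_deleteEdges, edgeSet_edge_of_ne hxy,
      Set.mem_union, Set.mem_sdiff, Set.mem_singleton_iff, Finset.mem_insert, Finset.mem_erase]
    tauto
  have hab' : s(a, b) ∈ M.edgeSet.toFinite.toFinset := by simpa using hab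
  unfold totalWeight
  rw [hedges, Finset.sum_insert (by simpa [and_comm] using hnew), ← Finset.add_sum_erase _ w hab']
  ring

lemma IsSpanningTree.deleteEdges_sup_edge (hM : IsSpanningTree G M) (hab : M.Adj a b)
    (hxy : G.Adj x y) (hxa : (M.deleteEdges {s(a, b)}).Reachable x a)
    (hyb : (M.deleteEdges {s(a, b)}).Reachable y b) :
    IsSpanningTree G (M.deleteEdges {s(a, b)} ⊔ edge x y) :=
  ⟨sup_le ((deleteEdges_le _).trans hM.1) ((edge_le_iff G).mpr (.inr hxy)),
    hM.2.deleteEdges_sup_edge hab hxy.ne hxa hyb⟩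

section MST

variable [Finite V] {w : Sym2 V → ℝ}

lemma IsMST.totalWeight_deleteEdges_sup_edge (hM : IsMST G w M) (hab : M.Adj a b)
    (hxy : x ≠ y) (hxa : (M.deleteEdges {s(a, b)}).Reachable x a)
    (hyb : (M.deleteEdges {s(a, b)}).Reachable y b) :
    totalWeight (M.deleteEdges {s(a, b)} ⊔ edge x y) w
      = totalWeight M w - w s(a, b) + w s(x, y) :=
  _root_.totalWeight_deleteEdges_sup_edge w hab hxy
    fun h => hM.1.2.not_reachable_deleteEdges hab hxa hyb h.reachable

lemma IsMST.weight_le_of_reachable_deleteEdges (hM : IsMST G w M) (hab : M.Adj a b)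
    (hxy : G.Adj x y) (hxa : (M.deleteEdges {s(a, b)}).Reachable x a)
    (hyb : (M.deleteEdges {s(a, b)}).Reachable y b) :
    w s(a, b) ≤ w s(x, y) := by
  have := hM.2 _ (hM.1.deleteEdges_sup_edge hab hxy hxa hyb)
  rw [hM.totalWeight_deleteEdges_sup_edge hab hxy.ne hxa hyb] at this
  linarith

lemma IsMST.deleteEdges_sup_edge (hM : IsMST G w M) (hab : M.Adj a b)
    (hxy : G.Adj x y) (hxa : (M.deleteEdges {s(a, b)}).Reachable x a)
    (hyb : (M.deleteEdges {s(a, b)}).Reachable y b) (hw : w s(x, y) ≤ w s(a, b)) :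
    IsMST G w (M.deleteEdges {s(a, b)} ⊔ edge x y) := by
  refine ⟨hM.1.deleteEdges_sup_edge hab hxy hxa hyb, fun M' hM' => ?_⟩
  rw [hM.totalWeight_deleteEdges_sup_edge hab hxy.ne hxa hyb]
  linarith [hM.2 M' hM']

lemma IsMST.exists_isMST_adj_of_lt_of_le (hM : IsMST G w M) (hab : M.Adj a b)
    (hac : G.Adj a c) (hcb : G.Adj c b) (hlt : w s(a, c) < w s(a, b))
    (hle : w s(c, b) ≤ w s(a, b)) :
    w s(c, b) = w s(a, b) ∧ ∃ M' : SimpleGraph V, IsMST G w M' ∧ M'.Adj c b := by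
  rcases hM.1.2.connected.preconnected.reachable_deleteEdges_left_or_right a b c with hca | hcb'
  · refine ⟨le_antisymm hle (hM.weight_le_of_reachable_deleteEdges hab hcb hca .rfl),
      _, hM.deleteEdges_sup_edge hab hcb hca .rfl hle, ?_⟩
    exact le_sup_right (a := M.deleteEdges {s(a, b)}) <|
      (edge_adj ..).mpr ⟨Or.inl ⟨rfl, rfl⟩, hcb.ne⟩
  · exact absurd (hM.weight_le_of_reachable_deleteEdges hab hac .rfl hcb') (not_le.mpr hlt)

end MST

end Exchange

namespace PhyloTree

variable {V : Type*} (P : PhyloTree V) {u v w : V}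

lemma dist_eq_sum_of_isPath (p : P.T.Walk u v) (hp : p.IsPath) :
    P.dist u v = (p.edges.map P.len).sum := by
  rw [dist, (P.isTree.existsUnique_path u v).unique hp (P.path_isPath u v)]

lemma dist_le_sum (p : P.T.Walk u v) : P.dist u v ≤ (p.edges.map P.len).sum := by
  classical
  obtain ⟨l, hperm, hsub⟩ :=
    List.subperm_of_subset p.bypass_isPath.edges_nodup p.edges_bypass_subset_edges
  rw [P.dist_eq_sum_of_isPath _ p.bypass_isPath, ← (hperm.map P.len).sum_eq]
  refine (hsub.map P.len).sum_le_sum fun x hx => ?_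
  obtain ⟨e, he, rfl⟩ := List.mem_map.mp hx
  exact (P.len_pos e (p.edges_subset_edgeSet he)).le

lemma dist_triangle (u v w : V) : P.dist u w ≤ P.dist u v + P.dist v w := by
  simpa [dist] using P.dist_le_sum ((P.path u v).append (P.path v w))

lemma dist_eq_add_of_mem_support (hw : w ∈ (P.path u v).support) :
    P.dist u v = P.dist u w + P.dist w v := by
  classical
  have hp := P.path_isPath u v
  rw [P.dist_eq_sum_of_isPath _ (hp.takeUntil hw), P.dist_eq_sum_of_isPath _ (hp.dropUntil hw),
    ← List.sum_append, ← List.map_append, ← Walk.edges_append, Walk.take_spec, dist]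

lemma dist_eq_add_of_neighborSet_eq_singleton {l h : V} (hl : P.T.neighborSet l = {h})
    (hu : u ≠ l) : P.dist l u = P.dist l h + P.dist h u := by
  refine P.dist_eq_add_of_mem_support ?_
  cases hp : P.path l u with
  | nil => exact absurd rfl hu
  | cons hlx q =>
    obtain rfl : _ = h := (Set.ext_iff.mp hl _).mp hlx
    simp

lemma dist_lt_of_mem_Sg_of_notMem {h l j : V} (hl : l ∈ P.Sg h) (hj : j ∈ P.L)
    (hjs : j ∉ P.Sg h) : P.dist l h < P.dist j h := by
  obtain ⟨l', hl', hlt⟩ : ∃ l' ∈ P.L, P.dist l' h < P.dist j h := by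
    simpa [Sg, hj] using hjs
  exact (hl.2 l' hl').trans_lt hlt

lemma dist_eq_of_mem_Sg {h l l' : V} (hl : l ∈ P.Sg h) (hl' : l' ∈ P.Sg h) :
    P.dist l h = P.dist l' h :=
  (hl.2 l' hl'.1).antisymm (hl'.2 l hl.1)

end PhyloTree

theorem leaf_neighbor_transfer_general {V : Type*} [Finite V] (P : PhyloTree V)
    (h : V)
    (l : V) (hleaf : (P.T.neighborSet l).ncard = 1) (hadj : P.T.Adj h l)
    (hl : l ∈ P.Sg h) (v : V) (hv : v ∈ P.Sg h) (hvl : v ≠ l)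
    (j : V) (hj : j ∈ P.L) (hjs : j ∉ P.Sg h)
    (hje : ∃ M : SimpleGraph ↥P.L, IsMST (⊤ : SimpleGraph ↥P.L) P.wG M ∧
      M.Adj ⟨l, hl.1⟩ ⟨j, hj⟩) :
    P.dist j l = P.dist j v ∧
    ∃ M : SimpleGraph ↥P.L, IsMST (⊤ : SimpleGraph ↥P.L) P.wG M ∧
      M.Adj ⟨v, hv.1⟩ ⟨j, hj⟩ := by
  obtain ⟨M, hM, hlj⟩ := hje
  have hnbr : P.T.neighborSet l = {h} :=
    (Set.eq_of_subset_of_ncard_le (t := P.T.neighborSet l)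
      (Set.singleton_subset_iff.mpr hadj.symm) (by rw [hleaf, Set.ncard_singleton])).symm
  have hjl : j ≠ l := fun e => hjs (e ▸ hl)
  have hvj : v ≠ j := fun e => hjs (e ▸ hv)
  have hlh_lt := P.dist_lt_of_mem_Sg_of_notMem hl hj hjs
  have hvh := P.dist_eq_of_mem_Sg hv hl
  have hlv := P.dist_eq_add_of_neighborSet_eq_singleton hnbr hvl
  have hlj' := P.dist_eq_add_of_neighborSet_eq_singleton hnbr hjl
  have hvj_le : P.dist v j ≤ P.dist l j := by
    linarith [P.dist_triangle v h j, P.dist_comm h v, P.dist_comm h j]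
  have hlt : P.wG s(⟨l, hl.1⟩, ⟨v, hv.1⟩) < P.wG s(⟨l, hl.1⟩, ⟨j, hj⟩) :=
    show P.dist l v < P.dist l j by linarith [P.dist_comm h v, P.dist_comm h j]
  obtain ⟨hvj_eq, hMvj⟩ := hM.exists_isMST_adj_of_lt_of_le hlj
    (by simpa using hvl.symm) (by simpa using hvj) hlt hvj_le
  exact ⟨by rw [P.dist_comm j l, P.dist_comm j v]; exact hvj_eq.symm, hMvj⟩

/-- for a leaf `l ∈ Sg(h)` adjacent to the hidden vertex `h` and any other
`v ∈ Sg(h)`: every labeled `j ∉ Sg(h)` joined to `l` by an edge of some MST satisfies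
`d(j,l) = d(j,v)`, and the edge `{v,j}` also lies in some MST. -/
theorem leaf_neighbor_transfer {V : Type*} [Finite V] (P : PhyloTree V)
    (h : V) (hh : h ∉ P.L)
    (l : V) (hleaf : (P.T.neighborSet l).ncard = 1) (hadj : P.T.Adj h l)
    (hl : l ∈ P.Sg h) (v : V) (hv : v ∈ P.Sg h) (hvl : v ≠ l)
    (j : V) (hj : j ∈ P.L) (hjs : j ∉ P.Sg h)
    (hje : ∃ M : SimpleGraph ↥P.L, IsMST (⊤ : SimpleGraph ↥P.L) P.wG M ∧
      M.Adj ⟨l, hl.1⟩ ⟨j, hj⟩) :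
    P.dist j l = P.dist j v ∧
    ∃ M : SimpleGraph ↥P.L, IsMST (⊤ : SimpleGraph ↥P.L) P.wG M ∧
      M.Adj ⟨v, hv.1⟩ ⟨j, hj⟩ :=
  leaf_neighbor_transfer_general P h l hleaf hadj hl v hv hvl j hj hjs hje
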